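/- Let O ⊆ X_A be a nonempty open set and η ∈ Γ_O with η ≠ id. Then for every nonempty clopen set U ⊆ O there exists γ ∈ Γ_O such that the restriction of γ⁻¹ηγ to U is not the identity. -/
import Mathlib


open Set

instance homeoGroup {α : Type*} [TopologicalSpace α] : Group (α ≃ₜ α) where
  mul a b := b.trans a
  one := Homeomorph.refl α
  inv := Homeomorph.symm
  mul_assoc _ _ _ := Homeomorph.ext fun _ => rfl
  one_mul _ := Homeomorph.ext fun _ => rfl
  mul_one _ := Homeomorph.ext fun _ => rfl
  inv_mul_cancel a := Homeomorph.ext fun x => a.symm_apply_apply x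

@[simp] theorem homeo_mul_apply {α : Type*} [TopologicalSpace α] (a b : α ≃ₜ α) (x : α) :
    (a * b) x = a (b x) := rfl

@[simp] theorem homeo_inv_apply {α : Type*} [TopologicalSpace α] (a : α ≃ₜ α) (x : α) :
    a⁻¹ x = a.symm x := rfl

/-- The one-sided shift space `X_A` of a 0-1 matrix `A`. -/
abbrev ShiftSpace {N : ℕ} (A : Fin N → Fin N → Bool) : Type :=
  {x : ℕ → Fin N // ∀ n, A (x n) (x (n + 1)) = true}

/-- The one-sided shift `σ_A`. -/
def shiftMap {N : ℕ} (A : Fin N → Fin N → Bool) (x : ShiftSpace A) : ShiftSpace A :=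
  ⟨fun n => x.1 (n + 1), fun n => x.2 (n + 1)⟩

/-- Irreducibility of the matrix `A`: any two indices are connected by a path. -/
def MatrixIrreducible {N : ℕ} (A : Fin N → Fin N → Bool) : Prop :=
  ∀ i j : Fin N, ∃ n : ℕ, 0 < n ∧ ∃ w : ℕ → Fin N, w 0 = i ∧ w n = j ∧
    ∀ k < n, A (w k) (w (k + 1)) = true

/-- Condition (I): the shift space is homeomorphic to the Cantor set. -/
def ConditionI {N : ℕ} (A : Fin N → Fin N → Bool) : Prop :=
  Nonempty (ShiftSpace A ≃ₜ (ℕ → Bool))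

/-- The continuous full group `Γ_A`. -/
def fullGroup {N : ℕ} (A : Fin N → Fin N → Bool) :
    Subgroup (ShiftSpace A ≃ₜ ShiftSpace A) where
  carrier := {τ | ∃ k l : ShiftSpace A → ℕ, Continuous k ∧ Continuous l ∧
    ∀ x, (shiftMap A)^[k x] (τ x) = (shiftMap A)^[l x] x}
  one_mem' := ⟨fun _ => 0, fun _ => 0, continuous_const, continuous_const, fun _ => rfl⟩
  mul_mem' := by
    rintro a b ⟨k1, l1, hk1, hl1, h1⟩ ⟨k2, l2, hk2, hl2, h2⟩
    refine ⟨fun x => k2 x + k1 (b x), fun x => l1 (b x) + l2 x,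
      hk2.add (hk1.comp b.continuous), (hl1.comp b.continuous).add hl2, fun x => ?_⟩
    calc (shiftMap A)^[k2 x + k1 (b x)] ((a * b) x)
        = (shiftMap A)^[k2 x] ((shiftMap A)^[k1 (b x)] (a (b x))) :=
          Function.iterate_add_apply _ _ _ _
      _ = (shiftMap A)^[k2 x] ((shiftMap A)^[l1 (b x)] (b x)) := by rw [h1]
      _ = (shiftMap A)^[l1 (b x)] ((shiftMap A)^[k2 x] (b x)) := by
          rw [← Function.iterate_add_apply, Nat.add_comm, Function.iterate_add_apply]
      _ = (shiftMap A)^[l1 (b x)] ((shiftMap A)^[l2 x] x) := by rw [h2]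
      _ = (shiftMap A)^[l1 (b x) + l2 x] x := (Function.iterate_add_apply _ _ _ _).symm
  inv_mem' := by
    rintro a ⟨k, l, hk, hl, h⟩
    refine ⟨fun x => l (a⁻¹ x), fun x => k (a⁻¹ x),
      hl.comp a.symm.continuous, hk.comp a.symm.continuous, fun x => ?_⟩
    have := (h (a⁻¹ x)).symm
    rwa [show a (a⁻¹ x) = x from a.apply_symm_apply x] at this

/-- The local subgroup `Γ_O` of `Γ_A` associated to a set `O`. -/
def localGroup {N : ℕ} (A : Fin N → Fin N → Bool) (O : Set (ShiftSpace A)) :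
    Subgroup (ShiftSpace A ≃ₜ ShiftSpace A) where
  carrier := {γ | γ ∈ fullGroup A ∧ ∀ x ∉ O, γ x = x}
  one_mem' := ⟨(fullGroup A).one_mem, fun _ _ => rfl⟩
  mul_mem' := by
    rintro a b ⟨haΓ, ha⟩ ⟨hbΓ, hb⟩
    exact ⟨mul_mem haΓ hbΓ, fun x hx => by
      show a (b x) = x
      rw [hb x hx, ha x hx]⟩
  inv_mem' := by
    rintro a ⟨haΓ, ha⟩
    refine ⟨inv_mem haΓ, fun x hx => ?_⟩
    conv_lhs => rw [← ha x hx]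
    exact a.symm_apply_apply x

/-- The commutant in `Γ_A` of a set of homeomorphisms. -/
def commutant {N : ℕ} (A : Fin N → Fin N → Bool)
    (S : Set (ShiftSpace A ≃ₜ ShiftSpace A)) : Set (ShiftSpace A ≃ₜ ShiftSpace A) :=
  {ξ | ξ ∈ fullGroup A ∧ ∀ γ ∈ S, ξ * γ = γ * ξ}

/-- The support `P_γ` of a homeomorphism `γ`. -/
def suppHomeo {N : ℕ} {A : Fin N → Fin N → Bool} (γ : ShiftSpace A ≃ₜ ShiftSpace A) :
    Set (ShiftSpace A) :=
  closure {x | γ x ≠ x}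

/-- The support `P_H` of a set of homeomorphisms. -/
def suppSet {N : ℕ} {A : Fin N → Fin N → Bool} (H : Set (ShiftSpace A ≃ₜ ShiftSpace A)) :
    Set (ShiftSpace A) :=
  closure (⋃ η ∈ H, interior (suppHomeo η))



open Set

section Aux

variable {N : ℕ} {A : Fin N → Fin N → Bool}

/-- Coordinates of shift iterates. -/
theorem shift_iter (k : ℕ) (x : ShiftSpace A) (n : ℕ) :
    ((shiftMap A)^[k] x).1 n = x.1 (n + k) := by
  induction k generalizing x with
  | zero => rfl
  | succ k ih =>
    rw [Function.iterate_succ_apply, ih]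
    show x.1 (n + k + 1) = x.1 (n + (k + 1))
    ring_nf

/-- Cylinder sets are small enough to fit in open sets. -/
theorem exists_cyl_subset {S : Set (ShiftSpace A)} (hS : IsOpen S) {x : ShiftSpace A}
    (hx : x ∈ S) : ∃ p : ℕ, ∀ y : ShiftSpace A, (∀ i ≤ p, y.1 i = x.1 i) → y ∈ S := by
  obtain ⟨V, hV, hVeq⟩ := isOpen_induced_iff.mp hS
  have hxV : x.1 ∈ V := by rw [← hVeq] at hx; exact hx
  obtain ⟨I, t, h1, h2⟩ := isOpen_pi_iff.mp hV x.1 hxV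
  refine ⟨I.sup id, fun y hy => ?_⟩
  have : y.1 ∈ V := by
    apply h2
    intro i hi
    have := hy i (Finset.le_sup (f := id) hi)
    rw [this]
    exact (h1 i hi).2
  rw [← hVeq]; exact this

/-- The membership condition for cylinder sets is clopen. -/
theorem isClopen_cyl (p : ℕ) (u : ℕ → Fin N) :
    IsClopen {x : ShiftSpace A | ∀ i ≤ p, x.1 i = u i} := by
  have : {x : ShiftSpace A | ∀ i ≤ p, x.1 i = u i}
      = ⋂ i ∈ Finset.range (p + 1), {x : ShiftSpace A | x.1 i = u i} := by
    ext x
    simp only [mem_setOf_eq, mem_iInter, Finset.mem_range]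
    constructor
    · intro h i hi; exact h i (Nat.lt_succ_iff.mp hi)
    · intro h i hi; exact h i (Nat.lt_succ_of_le hi)
  rw [this]
  apply isClopen_biInter_finset
  intro i _
  have hc : Continuous fun x : ShiftSpace A => x.1 i :=
    (continuous_apply i).comp continuous_subtype_val
  exact (isClopen_discrete {u i}).preimage hc

/-- Adjacency of the prefix replacement. -/
theorem repl_adj (p q : ℕ) (u v : ℕ → Fin N)
    (hv : ∀ i < q, A (v i) (v (i+1)) = true) (hl : u p = v q)
    (x : ShiftSpace A) (hx : ∀ i ≤ p, x.1 i = u i) (n : ℕ) :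
    A (if n ≤ q then v n else x.1 (n - q + p))
      (if n + 1 ≤ q then v (n+1) else x.1 (n + 1 - q + p)) = true := by
  rcases lt_trichotomy n q with h | h | h
  · rw [if_pos h.le, if_pos (by omega : n + 1 ≤ q)]
    exact hv n h
  · subst h
    rw [if_pos le_rfl, if_neg (by omega)]
    have h1 : n + 1 - n + p = p + 1 := by omega
    rw [h1, ← hl, ← hx p le_rfl]
    exact x.2 p
  · rw [if_neg (by omega), if_neg (by omega)]
    have h1 : n + 1 - q + p = (n - q + p) + 1 := by omega
    rw [h1]
    exact x.2 _

open scoped Classical in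
/-- The prefix-swap map. -/
noncomputable def swapFun (p q : ℕ) (u v : ℕ → Fin N)
    (hu : ∀ i < p, A (u i) (u (i+1)) = true) (hv : ∀ i < q, A (v i) (v (i+1)) = true)
    (hl : u p = v q) (x : ShiftSpace A) : ShiftSpace A :=
  if hx : ∀ i ≤ p, x.1 i = u i then
    ⟨fun n => if n ≤ q then v n else x.1 (n - q + p), repl_adj p q u v hv hl x hx⟩
  else if hx' : ∀ i ≤ q, x.1 i = v i then
    ⟨fun n => if n ≤ p then u n else x.1 (n - p + q), repl_adj q p v u hu hl.symm x hx'⟩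
  else x

section SwapLemmas

variable (p q : ℕ) (u v : ℕ → Fin N)
  (hu : ∀ i < p, A (u i) (u (i+1)) = true) (hv : ∀ i < q, A (v i) (v (i+1)) = true)
  (hl : u p = v q)

theorem swapFun_of_mem_fst {x : ShiftSpace A} (hx : ∀ i ≤ p, x.1 i = u i) (n : ℕ) :
    (swapFun p q u v hu hv hl x).1 n = if n ≤ q then v n else x.1 (n - q + p) := by
  unfold swapFun
  rw [dif_pos hx]

theorem swapFun_of_mem_snd {x : ShiftSpace A} (hx' : ∀ i ≤ q, x.1 i = v i)
    (hx : ¬ ∀ i ≤ p, x.1 i = u i) (n : ℕ) :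
    (swapFun p q u v hu hv hl x).1 n = if n ≤ p then u n else x.1 (n - p + q) := by
  unfold swapFun
  rw [dif_neg hx, dif_pos hx']

theorem swapFun_of_notMem {x : ShiftSpace A} (hx : ¬ ∀ i ≤ p, x.1 i = u i)
    (hx' : ¬ ∀ i ≤ q, x.1 i = v i) :
    swapFun p q u v hu hv hl x = x := by
  unfold swapFun
  rw [dif_neg hx, dif_neg hx']

theorem swapFun_invol
    (hdisj : ∀ x : ShiftSpace A, (∀ i ≤ p, x.1 i = u i) → ¬ ∀ i ≤ q, x.1 i = v i)
    (x : ShiftSpace A) :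
    swapFun p q u v hu hv hl (swapFun p q u v hu hv hl x) = x := by
  by_cases hx : ∀ i ≤ p, x.1 i = u i
  · set y := swapFun p q u v hu hv hl x with hy
    have hyv : ∀ i ≤ q, y.1 i = v i := by
      intro i hi
      rw [hy, swapFun_of_mem_fst p q u v hu hv hl hx, if_pos hi]
    have hyu : ¬ ∀ i ≤ p, y.1 i = u i := by
      intro h; exact hdisj y h hyv
    apply Subtype.ext; funext n
    rw [swapFun_of_mem_snd p q u v hu hv hl hyv hyu]
    by_cases hn : n ≤ p
    · rw [if_pos hn, hx n hn]
    · rw [if_neg hn, hy, swapFun_of_mem_fst p q u v hu hv hl hx,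
        if_neg (by omega), show n - p + q - q + p = n by omega]
  · by_cases hx' : ∀ i ≤ q, x.1 i = v i
    · set y := swapFun p q u v hu hv hl x with hy
      have hyu : ∀ i ≤ p, y.1 i = u i := by
        intro i hi
        rw [hy, swapFun_of_mem_snd p q u v hu hv hl hx' hx, if_pos hi]
      apply Subtype.ext; funext n
      rw [swapFun_of_mem_fst p q u v hu hv hl hyu]
      by_cases hn : n ≤ q
      · rw [if_pos hn, hx' n hn]
      · rw [if_neg hn, hy, swapFun_of_mem_snd p q u v hu hv hl hx' hx,
          if_neg (by omega), show n - q + p - p + q = n by omega]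
    · rw [swapFun_of_notMem p q u v hu hv hl hx hx',
        swapFun_of_notMem p q u v hu hv hl hx hx']

open scoped Classical in
theorem swapFun_continuous : Continuous (swapFun p q u v hu hv hl) := by
  rw [continuous_induced_rng]
  apply continuous_pi
  intro n
  have key : ∀ x : ShiftSpace A, (swapFun p q u v hu hv hl x).1 n =
      if ∀ i ≤ p, x.1 i = u i then (if n ≤ q then v n else x.1 (n - q + p))
      else if ∀ i ≤ q, x.1 i = v i then (if n ≤ p then u n else x.1 (n - p + q))
      else x.1 n := by
    intro x
    by_cases hx : ∀ i ≤ p, x.1 i = u i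
    · rw [if_pos hx, swapFun_of_mem_fst p q u v hu hv hl hx]
    · rw [if_neg hx]
      by_cases hx' : ∀ i ≤ q, x.1 i = v i
      · rw [if_pos hx', swapFun_of_mem_snd p q u v hu hv hl hx' hx]
      · rw [if_neg hx', swapFun_of_notMem p q u v hu hv hl hx hx']
  have hcoord : ∀ m : ℕ, Continuous fun x : ShiftSpace A => x.1 m := fun m =>
    (continuous_apply m).comp continuous_subtype_val
  simp only [Function.comp_def, key]
  apply Continuous.if
  · intro a ha
    rw [(isClopen_cyl p u).frontier_eq] at ha
    exact absurd ha (notMem_empty a)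
  · by_cases hn : n ≤ q
    · simp only [if_pos hn]; exact continuous_const
    · simp only [if_neg hn]; exact hcoord _
  · apply Continuous.if
    · intro a ha
      rw [(isClopen_cyl q v).frontier_eq] at ha
      exact absurd ha (notMem_empty a)
    · by_cases hn : n ≤ p
      · simp only [if_pos hn]; exact continuous_const
      · simp only [if_neg hn]; exact hcoord _
    · exact hcoord n

variable (hdisj : ∀ x : ShiftSpace A, (∀ i ≤ p, x.1 i = u i) → ¬ ∀ i ≤ q, x.1 i = v i)

/-- The prefix-swap homeomorphism. -/
noncomputable def swapHomeo : ShiftSpace A ≃ₜ ShiftSpace A where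
  toFun := swapFun p q u v hu hv hl
  invFun := swapFun p q u v hu hv hl
  left_inv := swapFun_invol p q u v hu hv hl hdisj
  right_inv := swapFun_invol p q u v hu hv hl hdisj
  continuous_toFun := swapFun_continuous p q u v hu hv hl
  continuous_invFun := swapFun_continuous p q u v hu hv hl

open scoped Classical in
theorem swapHomeo_mem_fullGroup : swapHomeo p q u v hu hv hl hdisj ∈ fullGroup A := by
  refine ⟨fun x => if ∀ i ≤ p, x.1 i = u i then q + 1 else
      if ∀ i ≤ q, x.1 i = v i then p + 1 else 0,
    fun x => if ∀ i ≤ p, x.1 i = u i then p + 1 else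
      if ∀ i ≤ q, x.1 i = v i then q + 1 else 0, ?_, ?_, ?_⟩
  · apply Continuous.if
    · intro a ha
      rw [(isClopen_cyl p u).frontier_eq] at ha
      exact absurd ha (notMem_empty a)
    · exact continuous_const
    · apply Continuous.if
      · intro a ha
        rw [(isClopen_cyl q v).frontier_eq] at ha
        exact absurd ha (notMem_empty a)
      · exact continuous_const
      · exact continuous_const
  · apply Continuous.if
    · intro a ha
      rw [(isClopen_cyl p u).frontier_eq] at ha
      exact absurd ha (notMem_empty a)
    · exact continuous_const
    · apply Continuous.if
      · intro a ha
        rw [(isClopen_cyl q v).frontier_eq] at ha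
        exact absurd ha (notMem_empty a)
      · exact continuous_const
      · exact continuous_const
  · intro x
    dsimp only
    by_cases hx : ∀ i ≤ p, x.1 i = u i
    · rw [if_pos hx, if_pos hx]
      apply Subtype.ext; funext n
      rw [shift_iter, shift_iter]
      show (swapFun p q u v hu hv hl x).1 (n + (q + 1)) = x.1 (n + (p + 1))
      rw [swapFun_of_mem_fst p q u v hu hv hl hx, if_neg (by omega),
        show n + (q + 1) - q + p = n + (p + 1) by omega]
    · rw [if_neg hx, if_neg hx]
      by_cases hx' : ∀ i ≤ q, x.1 i = v i
      · rw [if_pos hx', if_pos hx']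
        apply Subtype.ext; funext n
        rw [shift_iter, shift_iter]
        show (swapFun p q u v hu hv hl x).1 (n + (p + 1)) = x.1 (n + (q + 1))
        rw [swapFun_of_mem_snd p q u v hu hv hl hx' hx, if_neg (by omega),
          show n + (p + 1) - p + q = n + (q + 1) by omega]
      · rw [if_neg hx', if_neg hx']
        show (swapFun p q u v hu hv hl x) = x
        exact swapFun_of_notMem p q u v hu hv hl hx hx'

end SwapLemmas

/-- Every admissible word extends to a point of the shift space. -/
theorem exists_point_of_word (hA : MatrixIrreducible A) (p : ℕ) (u : ℕ → Fin N)
    (hu : ∀ i < p, A (u i) (u (i+1)) = true) :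
    ∃ x : ShiftSpace A, ∀ i ≤ p, x.1 i = u i := by
  have hsucc : ∀ i : Fin N, ∃ j, A i j = true := by
    intro i
    obtain ⟨n, hn, w, hw0, _, hwadj⟩ := hA i i
    exact ⟨w 1, by rw [← hw0]; exact hwadj 0 hn⟩
  choose s hs using hsucc
  let g : ℕ → Fin N := fun n => Nat.rec (u 0) (fun k ih => if k + 1 ≤ p then u (k+1) else s ih) n
  have hg : ∀ i ≤ p, g i = u i := by
    intro i hi
    induction i with
    | zero => rfl
    | succ k ih => show (if k + 1 ≤ p then u (k+1) else s (g k)) = u (k+1); rw [if_pos hi]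
  refine ⟨⟨g, fun n => ?_⟩, hg⟩
  by_cases hn : n + 1 ≤ p
  · rw [hg n (by omega), hg (n+1) hn]
    exact hu n (by omega)
  · show A (g n) (if n + 1 ≤ p then u (n+1) else s (g n)) = true
    rw [if_neg hn]
    exact hs (g n)

end Aux


theorem stmt7 {N : ℕ} (hN : 1 < N) (A : Fin N → Fin N → Bool)
    (hA : MatrixIrreducible A) (hI : ConditionI A)
    (O : Set (ShiftSpace A)) (hO : IsOpen O) (hOne : O.Nonempty)
    (η : ShiftSpace A ≃ₜ ShiftSpace A) (hη : η ∈ localGroup A O) (hη1 : η ≠ 1)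
    (U : Set (ShiftSpace A)) (hU : IsClopen U) (hUne : U.Nonempty) (hUO : U ⊆ O) :
    ∃ γ ∈ localGroup A O, ∃ x ∈ U, (γ⁻¹ * η * γ) x ≠ x := by
  classical
  have hWex : ∃ z, η z ≠ z := by
    by_contra h
    push_neg at h
    exact hη1 (Homeomorph.ext h)
  by_cases hcase : ∃ x ∈ U, η x ≠ x
  · obtain ⟨x, hxU, hx⟩ := hcase
    refine ⟨1, (localGroup A O).one_mem, x, hxU, ?_⟩
    simpa using hx
  · push_neg at hcase
    set W : Set (ShiftSpace A) := {z | η z ≠ z} with hWdef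
    have hWopen : IsOpen W := by
      have h1 : W = {z | η z = z}ᶜ := by ext z; simp [hWdef]
      rw [h1]
      exact (isClosed_eq η.continuous continuous_id).isOpen_compl
    obtain ⟨z₀, hz₀⟩ := hWex
    have hWO : W ⊆ O := fun z hz => by
      by_contra hzO
      exact hz (hη.2 z hzO)
    obtain ⟨x₀, hx₀U⟩ := hUne
    obtain ⟨p, hp⟩ := exists_cyl_subset hU.isOpen hx₀U
    obtain ⟨q₀, hq₀⟩ := exists_cyl_subset hWopen (show z₀ ∈ W from hz₀)
    obtain ⟨n, hn, w, hw0, hwn, hwadj⟩ := hA (z₀.1 q₀) (x₀.1 p)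
    set u : ℕ → Fin N := x₀.1 with hudef
    set q := q₀ + n with hqdef
    set v : ℕ → Fin N := fun i => if i ≤ q₀ then z₀.1 i else w (i - q₀) with hvdef
    have hu : ∀ i < p, A (u i) (u (i+1)) = true := fun i _ => x₀.2 i
    have hv : ∀ i < q, A (v i) (v (i+1)) = true := by
      intro i hi
      rcases lt_trichotomy i q₀ with h | h | h
      · simp only [hvdef, if_pos h.le, if_pos (by omega : i + 1 ≤ q₀)]
        exact z₀.2 i
      · subst h
        simp only [hvdef, if_pos le_rfl, if_neg (by omega : ¬ i + 1 ≤ i),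
          show i + 1 - i = 1 by omega]
        rw [← hw0]
        exact hwadj 0 hn
      · simp only [hvdef, if_neg (by omega : ¬ i ≤ q₀), if_neg (by omega : ¬ i + 1 ≤ q₀),
          show i + 1 - q₀ = (i - q₀) + 1 by omega]
        exact hwadj (i - q₀) (by omega)
    have hl : u p = v q := by
      simp only [hvdef, if_neg (by omega : ¬ q ≤ q₀), show q - q₀ = n by omega, hwn]
    have hdisj : ∀ x : ShiftSpace A, (∀ i ≤ p, x.1 i = u i) → ¬ ∀ i ≤ q, x.1 i = v i := by
      intro x hxu hxv
      have hxU : x ∈ U := hp x hxu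
      have hxW : x ∈ W := by
        apply hq₀
        intro i hi
        have h2 := hxv i (le_trans hi (Nat.le_add_right _ _))
        simpa only [hvdef, if_pos hi] using h2
      exact hxW (hcase x hxU)
    set γ := swapHomeo p q u v hu hv hl hdisj with hγdef
    refine ⟨γ, ⟨swapHomeo_mem_fullGroup p q u v hu hv hl hdisj, ?_⟩, x₀, hx₀U, ?_⟩
    · intro x hxO
      show swapFun p q u v hu hv hl x = x
      apply swapFun_of_notMem
      · intro h; exact hxO (hUO (hp x h))
      · intro h
        apply hxO
        apply hWO
        apply hq₀
        intro i hi
        have h2 := h i (le_trans hi (Nat.le_add_right _ _))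
        simpa only [hvdef, if_pos hi] using h2
    · have hx₀u : ∀ i ≤ p, x₀.1 i = u i := fun i _ => rfl
      have hγx : γ x₀ ∈ W := by
        apply hq₀
        intro i hi
        have h3 : (γ x₀).1 i = v i := by
          show (swapFun p q u v hu hv hl x₀).1 i = v i
          rw [swapFun_of_mem_fst p q u v hu hv hl hx₀u,
            if_pos (le_trans hi (Nat.le_add_right _ _))]
        rw [h3]
        simp only [hvdef, if_pos hi]
      intro hcon
      simp only [homeo_mul_apply, homeo_inv_apply] at hcon
      have h4 : η (γ x₀) = γ x₀ := by
        have h5 := congrArg γ hcon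
        rwa [γ.apply_symm_apply] at h5
      exact hγx h4
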